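/- arXiv:1908.08324 — 2 statements merged into one kernel-verified Lean document; each statement's English description precedes it below -/
import Mathlib

section
/- Let H be a simply connected combinatorial strata structure endowed with a datum (N, {P_J}) of nodal strata, and let B be a nodal separating block of N in H. Then for every i ∈ I and every {j} ∈ B_B(i), there is a 1-path γ in H joining {i} and {j} such that κ_B(γ) = 1. -/
/-- A combinatorial strata structure with minimal set of indices the (finite) type `I`:
an open subset of `𝒫(I)` (i.e. a family closed under taking subsets) containing all
singletons. -/
def IsCSS {I : Type*} (H : Set (Finset I)) : Prop :=
  (∀ J ∈ H, ∀ J' : Finset I, J' ⊆ J → J' ∈ H) ∧ ∀ i : I, ({i} : Finset I) ∈ H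

/-- `level H k` is `H(k)`, the set of strata of `H` with exactly `k` elements. -/
def level {I : Type*} (H : Set (Finset I)) (k : ℕ) : Set (Finset I) :=
  {J ∈ H | J.card = k}

/-- A `k`-path in `H`: a nonempty sequence of strata of `H(k)` such that the union of
any two consecutive entries lies in `H(k+1)`. -/
def IsKPath {I : Type*} [DecidableEq I] (H : Set (Finset I)) (k : ℕ)
    (γ : List (Finset I)) : Prop :=
  γ ≠ [] ∧ (∀ J ∈ γ, J ∈ level H k) ∧
    γ.Chain' fun J J' => (J ∪ J') ∈ level H (k + 1)

/-- The path `γ` joins `J` and `J'`. -/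
def Joins {I : Type*} (γ : List (Finset I)) (J J' : Finset I) : Prop :=
  γ.head? = some J ∧ γ.getLast? = some J'

/-- The subsupport of a path: the sequence of unions of consecutive entries. -/
def subSup {I : Type*} [DecidableEq I] (γ : List (Finset I)) : List (Finset I) :=
  List.zipWith (· ∪ ·) γ γ.tail

open Classical in
/-- `kappa B γ`: the number of entries of the subsupport of `γ` that belong to `B`. -/
noncomputable def kappa {I : Type*} [DecidableEq I] (B : Set (Finset I))
    (γ : List (Finset I)) : ℕ :=
  (subSup γ).countP fun J => decide (J ∈ B)

/-- `A` is `k`-connected in `H`: any two elements of `A` are joined by a `k`-path in `H`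
with support contained in `A`. -/
def KConnectedIn {I : Type*} [DecidableEq I] (H : Set (Finset I)) (k : ℕ)
    (A : Set (Finset I)) : Prop :=
  ∀ J ∈ A, ∀ J' ∈ A, ∃ γ : List (Finset I),
    IsKPath H k γ ∧ Joins γ J J' ∧ ∀ K ∈ γ, K ∈ A

/-- `C` is a `k`-connected component of `A` in `H`: a maximal nonempty `k`-connected
subset of `A`. -/
def IsKComponent {I : Type*} [DecidableEq I] (H : Set (Finset I)) (k : ℕ)
    (A C : Set (Finset I)) : Prop :=
  C.Nonempty ∧ C ⊆ A ∧ KConnectedIn H k C ∧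
    ∀ C' : Set (Finset I), C ⊆ C' → C' ⊆ A → KConnectedIn H k C' → C' = C

/-- `H` is 1-connected: `H(1)` is 1-connected in `H`. -/
def OneConnected {I : Type*} [DecidableEq I] (H : Set (Finset I)) : Prop :=
  KConnectedIn H 1 (level H 1)

/-- One-sided version of an elementary homotopic pair of 1-paths in `H`. -/
def ElemPairCore {I : Type*} [DecidableEq I] (H : Set (Finset I))
    (ε ε' : List (Finset I)) : Prop :=
  ε = ε'
  ∨ (∃ i₁ i₂ : I, ε = [{i₁}, {i₂}, {i₁}] ∧ ε' = [{i₁}])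
  ∨ (∃ i₁ i₂ i₃ : I, ε = [{i₁}, {i₂}] ∧ ε' = [{i₁}, {i₃}, {i₂}] ∧
      IsKPath H 2 [{i₁, i₃}, {i₃, i₂}])

/-- An elementary homotopic pair of 1-paths in `H` (up to swapping the two paths). -/
def ElemPair {I : Type*} [DecidableEq I] (H : Set (Finset I))
    (ε ε' : List (Finset I)) : Prop :=
  ElemPairCore H ε ε' ∨ ElemPairCore H ε' ε

/-- `γ₂` is obtained from `γ₁` by an elementary homotopy. -/
def ElemHomotopy {I : Type*} [DecidableEq I] (H : Set (Finset I))
    (γ₁ γ₂ : List (Finset I)) : Prop :=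
  ∃ δ ε₁ ε₂ ρ : List (Finset I),
    ElemPair H ε₁ ε₂ ∧ γ₁ = δ ++ ε₁ ++ ρ ∧ γ₂ = δ ++ ε₂ ++ ρ

/-- `γ` and `γ'` are homotopically equivalent in `H` with support in `A`: they are linked
by a finite chain of elementary homotopies in which every intermediate 1-path has
support in `A`. -/
def HomotopicIn {I : Type*} [DecidableEq I] (H A : Set (Finset I))
    (γ γ' : List (Finset I)) : Prop :=
  (IsKPath H 1 γ ∧ ∀ J ∈ γ, J ∈ A) ∧
    Relation.ReflTransGen
      (fun g₁ g₂ => ElemHomotopy H g₁ g₂ ∧ IsKPath H 1 g₂ ∧ ∀ J ∈ g₂, J ∈ A) γ γ'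

/-- A 1-connected subset `A ⊆ H(1)` is simply connected in `H`: any two 1-paths in `H`
with support in `A` joining the same strata are homotopically equivalent in `H` with
support in `A`. -/
def SimplyConnectedIn {I : Type*} [DecidableEq I] (H A : Set (Finset I)) : Prop :=
  KConnectedIn H 1 A ∧
    ∀ γ γ' : List (Finset I), IsKPath H 1 γ → IsKPath H 1 γ' →
      (∀ J ∈ γ, J ∈ A) → (∀ J ∈ γ', J ∈ A) →
      γ.head? = γ'.head? → γ.getLast? = γ'.getLast? →
      HomotopicIn H A γ γ'

/-- `H` is simply connected: `H(1)` is simply connected in `H`. -/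
def SimplyConnected {I : Type*} [DecidableEq I] (H : Set (Finset I)) : Prop :=
  SimplyConnectedIn H (level H 1)

/-- The closure of `A` in `H`: the strata of `H` containing some element of `A`. -/
def Cl {I : Type*} (H A : Set (Finset I)) : Set (Finset I) :=
  {J' ∈ H | ∃ J ∈ A, J ⊆ J'}

/-- A datum of nodal strata `(N, {P_J})` in `H`: a subset `N ⊆ H` together with, for each
`J ∈ N`, a partition `P_J = {J₊, J₋}` of `J` into two nonempty parts, such that for every
`J ∈ N` and `J' ⊆ J` one has `J' ∈ N` iff `J' ∩ J₊ ≠ ∅ ≠ J' ∩ J₋`, and in that case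
`P_{J'} = {J' ∩ J₊, J' ∩ J₋}`. -/
structure NodalDatum {I : Type*} [DecidableEq I] (H : Set (Finset I)) : Type _ where
  N : Set (Finset I)
  N_sub : N ⊆ H
  plus : Finset I → Finset I
  minus : Finset I → Finset I
  plus_nonempty : ∀ J ∈ N, (plus J).Nonempty
  minus_nonempty : ∀ J ∈ N, (minus J).Nonempty
  union_eq : ∀ J ∈ N, plus J ∪ minus J = J
  disj : ∀ J ∈ N, Disjoint (plus J) (minus J)
  mem_iff : ∀ J ∈ N, ∀ J' : Finset I, J' ⊆ J →
    (J' ∈ N ↔ (J' ∩ plus J).Nonempty ∧ (J' ∩ minus J).Nonempty)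
  part_eq : ∀ J ∈ N, ∀ J' : Finset I, J' ⊆ J → J' ∈ N →
    ({plus J', minus J'} : Set (Finset I)) = {J' ∩ plus J, J' ∩ minus J}

/-- `N*`: the set of uninterrupted nodal strata, i.e. `J ∈ N` with `Cl_H({J}) ⊆ N`. -/
def Nstar {I : Type*} [DecidableEq I] {H : Set (Finset I)} (D : NodalDatum H) :
    Set (Finset I) :=
  {J ∈ D.N | ∀ J' ∈ H, J ⊆ J' → J' ∈ D.N}

/-- A nodal block of `N` in `H`: a 2-connected component of `N(2) = N ∩ H(2)` in `H`. -/
def IsNodalBlock {I : Type*} [DecidableEq I] {H : Set (Finset I)} (D : NodalDatum H)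
    (B : Set (Finset I)) : Prop :=
  IsKComponent H 2 (D.N ∩ level H 2) B

/-- A nodal separating block: a nodal block contained in `N*`. -/
def IsSepBlock {I : Type*} [DecidableEq I] {H : Set (Finset I)} (D : NodalDatum H)
    (B : Set (Finset I)) : Prop :=
  IsNodalBlock D B ∧ B ⊆ Nstar D

/-- The separator set: the union of all nodal separating blocks. -/
def SepSet {I : Type*} [DecidableEq I] {H : Set (Finset I)} (D : NodalDatum H) :
    Set (Finset I) :=
  ⋃₀ {B | IsSepBlock D B}

/-- `A_B(i)`: the set of `{j} ∈ H(1)` joined to `{i}` by a 1-path `γ` in `H` with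
`κ_B(γ)` even. -/
def ABset {I : Type*} [DecidableEq I] (H B : Set (Finset I)) (i : I) : Set (Finset I) :=
  {J ∈ level H 1 | ∃ γ : List (Finset I),
    IsKPath H 1 γ ∧ Joins γ {i} J ∧ Even (kappa B γ)}

/-- `B_B(i)`: the set of `{j} ∈ H(1)` joined to `{i}` by a 1-path `γ` in `H` with
`κ_B(γ)` odd. -/
def BBset {I : Type*} [DecidableEq I] (H B : Set (Finset I)) (i : I) : Set (Finset I) :=
  {J ∈ level H 1 | ∃ γ : List (Finset I),
    IsKPath H 1 γ ∧ Joins γ {i} J ∧ Odd (kappa B γ)}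

/-!
The parity of `κ_B` is a homotopy invariant. An elementary homotopy only changes a path
inside a triangle `T ∈ H(3)`; if some 2-face of `T` lies in `B`, then `T ∈ N` because
`B ⊆ N*`, one part of the partition `P_T` is a single vertex `z`, the 2-faces of `T` in `N` are
the two through `z`, and maximality of the block puts both of them in `B`. So every triangle
has an even number of 2-faces in `B`, and by simple connectivity the parity of `κ_B(γ)` depends
only on the endpoints of `γ`. On the other hand, a path crossing `B` at least twice can be
rerouted between its first two crossings along the 2-connected block, losing at least one
crossing. Descending from an odd crossing number therefore ends at a path crossing `B` exactly
once.
-/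

section Finset

variable {I : Type*} [DecidableEq I]

theorem Finset.inter_singleton_nonempty_and_iff {z : I} {M g : Finset I} (hg : g ⊆ {z} ∪ M)
    (hcard : g.card = 2) : (g ∩ {z}).Nonempty ∧ (g ∩ M).Nonempty ↔ z ∈ g := by
  refine ⟨fun ⟨⟨u, hu⟩, _⟩ => ?_, fun hz => ⟨⟨z, by simp [hz]⟩, ?_⟩⟩
  · rw [Finset.mem_inter, Finset.mem_singleton] at hu
    exact hu.2 ▸ hu.1
  obtain ⟨u, hu, huz⟩ := Finset.exists_mem_ne (by omega : 1 < g.card) z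
  have := hg hu
  exact ⟨u, by simp_all⟩

theorem Finset.union_eq_of_ne_of_card_eq_two {T e g : Finset I} (he : e ⊆ T) (hg : g ⊆ T)
    (hT : T.card = 3) (he₂ : e.card = 2) (hg₂ : g.card = 2) (hne : e ≠ g) : e ∪ g = T := by
  refine Finset.eq_of_subset_of_card_le (Finset.union_subset he hg) (hT ▸ ?_)
  by_contra! hlt
  have h₁ : e = e ∪ g := Finset.eq_of_subset_of_card_le Finset.subset_union_left (by omega)
  have h₂ : g = e ∪ g := Finset.eq_of_subset_of_card_le Finset.subset_union_right (by omega)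
  exact hne (h₁.trans h₂.symm)

end Finset

theorem singleton_mem_level {I : Type*} {H : Set (Finset I)} (hH : IsCSS H) (v : I) :
    ({v} : Finset I) ∈ level H 1 :=
  ⟨hH.2 v, Finset.card_singleton v⟩

section Joins

variable {I : Type*} {p q : List (Finset I)} {X Y Z : Finset I}

theorem Joins.reverse (h : Joins p X Y) : Joins p.reverse Y X :=
  ⟨by rw [List.head?_reverse, h.2], by rw [List.getLast?_reverse, h.1]⟩

theorem Joins.glue (hp : Joins p X Y) (hq : Joins q Y Z) : Joins (p ++ q.tail) X Z := by
  obtain ⟨y, q, rfl⟩ :=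
    List.exists_cons_of_ne_nil (show q ≠ [] by rintro rfl; simp [Joins] at hq)
  obtain rfl : y = Y := Option.some.inj hq.1
  refine ⟨by simp [List.head?_append, hp.1], ?_⟩
  rw [List.getLast?_append, List.tail_cons, hp.2, ← hq.2, List.getLast?_cons]
  cases q.getLast? <;> rfl

theorem mem_of_mem_glue {J : Finset I} (h : J ∈ p ++ q.tail) : J ∈ p ∨ J ∈ q :=
  (List.mem_append.1 h).imp_right List.mem_of_mem_tail

end Joins

section Paths

variable {I : Type*} [DecidableEq I] {H : Set (Finset I)} {k : ℕ}
  {p q : List (Finset I)} {x y : Finset I}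

theorem isKPath_pair (hx : x ∈ level H k) (hy : y ∈ level H k)
    (hxy : x ∪ y ∈ level H (k + 1)) : IsKPath H k [x, y] :=
  ⟨by simp, by simp [hx, hy], List.isChain_pair.2 hxy⟩

theorem IsKPath.of_cons (h : IsKPath H k (x :: p)) (hp : p ≠ []) : IsKPath H k p :=
  ⟨hp, fun J hJ => h.2.1 J (List.mem_cons_of_mem x hJ), h.2.2.tail⟩

theorem IsKPath.reverse (h : IsKPath H k p) : IsKPath H k p.reverse := by
  obtain ⟨hne, hmem, hchain⟩ := h
  refine ⟨by simpa using hne, by simpa using hmem, List.isChain_reverse.2 ?_⟩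
  exact hchain.imp fun J J' h => by rwa [Finset.union_comm]

theorem IsKPath.glue (hp : IsKPath H k p) (hq : IsKPath H k q)
    (h : p.getLast? = q.head?) : IsKPath H k (p ++ q.tail) := by
  obtain ⟨hpne, hpmem, hpchain⟩ := hp
  obtain ⟨hqne, hqmem, hqchain⟩ := hq
  obtain ⟨y, q, rfl⟩ := List.exists_cons_of_ne_nil hqne
  refine ⟨by simp [hpne], fun J hJ => ?_, List.isChain_append.2 ⟨hpchain, hqchain.tail, ?_⟩⟩
  · rcases List.mem_append.1 hJ with hJ | hJ
    exacts [hpmem J hJ, hqmem J (List.mem_cons_of_mem y hJ)]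
  · intro a ha b hb
    cases q with
    | nil => simp at hb
    | cons z q =>
      rw [h, List.head?_cons, Option.mem_some_iff] at ha
      rw [List.tail_cons, List.head?_cons, Option.mem_some_iff] at hb
      subst ha hb
      exact (List.isChain_cons_cons.1 hqchain).1

end Paths

section Connectivity

variable {I : Type*} [DecidableEq I] {H A C : Set (Finset I)} {k : ℕ} {f g : Finset I}

theorem KConnectedIn.insert_of_union_mem_level (hC : KConnectedIn H k C) (hf : f ∈ C)
    (hg : g ∈ level H k) (hfg : f ∪ g ∈ level H (k + 1)) : KConnectedIn H k (insert g C) := by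
  have to_f : ∀ J ∈ insert g C, ∃ γ : List (Finset I),
      IsKPath H k γ ∧ Joins γ J f ∧ ∀ K ∈ γ, K ∈ insert g C := by
    rintro J (rfl | hJ)
    · obtain ⟨γ, hγ, hj, -⟩ := hC f hf f hf
      have hfk : f ∈ level H k := hγ.2.1 f (List.mem_of_getLast? hj.2)
      refine ⟨[J, f], isKPath_pair hg hfk (Finset.union_comm f J ▸ hfg), ⟨rfl, rfl⟩, ?_⟩
      simp [hf]
    · obtain ⟨γ, hγ, hj, hγC⟩ := hC J hJ f hf
      exact ⟨γ, hγ, hj, fun K hK => Set.mem_insert_of_mem g (hγC K hK)⟩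
  intro J hJ J' hJ'
  obtain ⟨γ, hγ, hj, hγC⟩ := to_f J hJ
  obtain ⟨γ', hγ', hj', hγ'C⟩ := to_f J' hJ'
  refine ⟨γ ++ γ'.reverse.tail, hγ.glue hγ'.reverse (hj.2.trans hj'.reverse.1.symm),
    hj.glue hj'.reverse, fun K hK => ?_⟩
  rcases mem_of_mem_glue hK with hK | hK
  exacts [hγC K hK, hγ'C K (List.mem_reverse.1 hK)]

theorem IsKComponent.mem_of_union_mem_level (hC : IsKComponent H k A C) (hf : f ∈ C)
    (hgA : g ∈ A) (hg : g ∈ level H k) (hfg : f ∪ g ∈ level H (k + 1)) : g ∈ C := by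
  rw [← hC.2.2.2 (insert g C) (Set.subset_insert g C) (Set.insert_subset hgA hC.2.1)
    (hC.2.2.1.insert_of_union_mem_level hf hg hfg)]
  exact Set.mem_insert g C

end Connectivity

section Crossings

variable {I : Type*} [DecidableEq I] (B : Set (Finset I)) {p q : List (Finset I)}

theorem subSup_cons_cons (x y : Finset I) (t : List (Finset I)) :
    subSup (x :: y :: t) = (x ∪ y) :: subSup (y :: t) := rfl

theorem subSup_append (p q : List (Finset I)) :
    subSup (p ++ q) = subSup p ++ subSup (p.getLast?.toList ++ q.head?.toList) ++ subSup q := by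
  induction p with
  | nil => cases q <;> simp [subSup]
  | cons x p ih =>
    cases p with
    | nil => cases q <;> simp [subSup]
    | cons y p =>
      rw [List.cons_append, List.cons_append, subSup_cons_cons, ← List.cons_append, ih,
        subSup_cons_cons, List.getLast?_cons_cons]
      rfl

theorem kappa_append (p q : List (Finset I)) :
    kappa B (p ++ q) = kappa B p + kappa B (p.getLast?.toList ++ q.head?.toList) + kappa B q := by
  simp only [kappa]
  rw [subSup_append, List.countP_append, List.countP_append]

theorem kappa_singleton (x : Finset I) : kappa B [x] = 0 := rfl

theorem kappa_glue {x : Finset I} (h : p.getLast? = some x) (q : List (Finset I)) :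
    kappa B (p ++ q) = kappa B p + kappa B (x :: q) := by
  rw [kappa_append, h, ← List.singleton_append, kappa_append B [x], kappa_singleton,
    List.getLast?_singleton]
  omega

theorem kappa_pair_of_mem {x y : Finset I} (h : x ∪ y ∈ B) : kappa B [x, y] = 1 := by
  simp [kappa, subSup, h]

theorem kappa_pair_of_not_mem {x y : Finset I} (h : x ∪ y ∉ B) : kappa B [x, y] = 0 := by
  simp [kappa, subSup, h]

theorem kappa_pair_comm (x y : Finset I) : kappa B [x, y] = kappa B [y, x] := by
  simp only [kappa, subSup, List.tail_cons, List.zipWith_cons_cons, List.zipWith_nil_right,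
    Finset.union_comm x y]

theorem kappa_append_add_kappa {ε ε' : List (Finset I)} (δ ρ : List (Finset I))
    (hh : ε.head? = ε'.head?) (hl : ε.getLast? = ε'.getLast?) :
    kappa B (δ ++ ε ++ ρ) + kappa B ε' = kappa B (δ ++ ε' ++ ρ) + kappa B ε := by
  rw [kappa_append B (δ ++ ε), kappa_append B δ, kappa_append B (δ ++ ε'), kappa_append B δ,
    List.getLast?_append, List.getLast?_append, hh, hl]
  omega

end Crossings

section JoinedCrossing

variable {I : Type*} [DecidableEq I] {H B : Set (Finset I)} {m n : ℕ} {x y X Y Z : Finset I}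

def JoinedCrossing (H B : Set (Finset I)) (n : ℕ) (X Y : Finset I) : Prop :=
  ∃ γ : List (Finset I), IsKPath H 1 γ ∧ Joins γ X Y ∧ kappa B γ = n

theorem JoinedCrossing.refl (hX : X ∈ level H 1) : JoinedCrossing H B 0 X X :=
  ⟨[X], ⟨by simp, by simpa using hX, List.isChain_singleton X⟩, ⟨rfl, rfl⟩, rfl⟩

theorem JoinedCrossing.trans (h : JoinedCrossing H B m X Y) (h' : JoinedCrossing H B n Y Z) :
    JoinedCrossing H B (m + n) X Z := by
  obtain ⟨γ, hγ, hj, rfl⟩ := h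
  obtain ⟨γ', hγ', hj', rfl⟩ := h'
  refine ⟨γ ++ γ'.tail, hγ.glue hγ' (hj.2.trans hj'.1.symm), hj.glue hj', ?_⟩
  obtain ⟨y, q, rfl⟩ := List.exists_cons_of_ne_nil hγ'.1
  obtain rfl : y = Y := Option.some.inj hj'.1
  exact kappa_glue B hj.2 q

theorem JoinedCrossing.of_pair (hx : x ∈ level H 1) (hy : y ∈ level H 1)
    (hxy : x ∪ y ∈ level H 2) : JoinedCrossing H B (kappa B [x, y]) x y :=
  ⟨[x, y], isKPath_pair hx hy hxy, ⟨rfl, rfl⟩, rfl⟩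

theorem JoinedCrossing.exists_first_crossing (h : JoinedCrossing H B n X Y) (hn : 1 ≤ n) :
    ∃ x y : I, ({x, y} : Finset I) ∈ B ∧ JoinedCrossing H B 0 X {x} ∧
      JoinedCrossing H B (n - 1) {y} Y := by
  obtain ⟨γ, hγ, hj, rfl⟩ := h
  induction γ generalizing X with
  | nil => exact absurd rfl hγ.1
  | cons a t ih =>
    obtain ⟨b, t, rfl⟩ := List.exists_cons_of_ne_nil
      (show t ≠ [] by rintro rfl; simp [kappa_singleton] at hn)
    obtain rfl : a = X := Option.some.inj hj.1
    have ha := hγ.2.1 a (by simp)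
    have hb := hγ.2.1 b (by simp)
    have hbt : IsKPath H 1 (b :: t) := hγ.of_cons (List.cons_ne_nil b t)
    have hj' : Joins (b :: t) b Y := ⟨rfl, by rw [← hj.2, List.getLast?_cons_cons]⟩
    have hκ : kappa B (a :: b :: t) = kappa B [a, b] + kappa B (b :: t) :=
      kappa_glue B (p := [a, b]) rfl t
    by_cases hab : a ∪ b ∈ B
    · rw [hκ, kappa_pair_of_mem B hab, add_tsub_cancel_left]
      obtain ⟨x, rfl⟩ := Finset.card_eq_one.1 ha.2
      obtain ⟨y, rfl⟩ := Finset.card_eq_one.1 hb.2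
      exact ⟨x, y, by simpa using hab, .refl ha, _, hbt, hj', rfl⟩
    · rw [hκ, kappa_pair_of_not_mem B hab, zero_add] at hn ⊢
      obtain ⟨x, y, hxy, hbx, hyY⟩ := ih hbt hj' hn
      have hab' := JoinedCrossing.of_pair (B := B) ha hb (List.isChain_cons_cons.1 hγ.2.2).1
      rw [kappa_pair_of_not_mem B hab] at hab'
      exact ⟨x, y, hxy, hab'.trans hbx, hyY⟩

theorem JoinedCrossing.exists_le_one_of_mem (hH : IsCSS H) {e : Finset I} (he : e ∈ B)
    (he₂ : e ∈ level H 2) {v w : I} (hv : v ∈ e) (hw : w ∈ e) :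
    ∃ m ≤ 1, JoinedCrossing H B m {v} {w} := by
  rcases eq_or_ne v w with rfl | hne
  · exact ⟨0, zero_le_one, .refl (singleton_mem_level hH v)⟩
  have hvw : ({v} ∪ {w} : Finset I) = e := by
    rw [Finset.singleton_union]
    exact Finset.eq_of_subset_of_card_le (by simp [Finset.insert_subset_iff, hv, hw])
      (by rw [he₂.2, Finset.card_pair hne])
  have h := JoinedCrossing.of_pair (B := B) (singleton_mem_level hH v)
    (singleton_mem_level hH w) (hvw ▸ he₂)
  exact ⟨1, le_rfl, kappa_pair_of_mem B (hvw ▸ he) ▸ h⟩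

end JoinedCrossing

theorem NodalDatum.exists_apex {I : Type*} [DecidableEq I] {H : Set (Finset I)}
    (D : NodalDatum H) {T : Finset I} (hT : T ∈ D.N) (hcard : T.card = 3) :
    ∃ z ∈ T, ∀ g ⊆ T, g.card = 2 → (g ∈ D.N ↔ z ∈ g) := by
  have key : ∀ P M : Finset I, P ∪ M = T → P.card = 1 →
      (∀ g ⊆ T, g ∈ D.N ↔ (g ∩ P).Nonempty ∧ (g ∩ M).Nonempty) →
      ∃ z ∈ T, ∀ g ⊆ T, g.card = 2 → (g ∈ D.N ↔ z ∈ g) := by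
    intro P M hPM hP hN
    obtain ⟨z, rfl⟩ := Finset.card_eq_one.1 hP
    exact ⟨z, hPM ▸ Finset.mem_union_left _ (Finset.mem_singleton_self z), fun g hg hg₂ =>
      (hN g hg).trans (Finset.inter_singleton_nonempty_and_iff (hPM ▸ hg) hg₂)⟩
  have hcards : (D.plus T).card + (D.minus T).card = 3 := by
    rw [← Finset.card_union_of_disjoint (D.disj T hT), D.union_eq T hT, hcard]
  have := (D.plus_nonempty T hT).card_pos
  have := (D.minus_nonempty T hT).card_pos
  obtain h | h : (D.plus T).card = 1 ∨ (D.minus T).card = 1 := by omega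
  · exact key _ _ (D.union_eq T hT) h (D.mem_iff T hT)
  · exact key _ _ ((Finset.union_comm _ _).trans (D.union_eq T hT)) h
      fun g hg => (D.mem_iff T hT g hg).trans and_comm

namespace IsSepBlock

variable {I : Type*} [DecidableEq I] {H B : Set (Finset I)} {D : NodalDatum H}

theorem exists_apex (hH : IsCSS H) (hB : IsSepBlock D B) {T e : Finset I}
    (hT : T ∈ level H 3) (he : e ∈ B) (heT : e ⊆ T) :
    ∃ z ∈ T, ∀ g ⊆ T, g.card = 2 → (g ∈ B ↔ z ∈ g) := by
  have hBN : B ⊆ D.N ∩ level H 2 := hB.1.2.1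
  obtain ⟨z, hzT, hz⟩ := D.exists_apex ((hB.2 he).2 T hT.1 heT) hT.2
  refine ⟨z, hzT, fun g hgT hg₂ =>
    ⟨fun hgB => (hz g hgT hg₂).1 (hBN hgB).1, fun hzg => ?_⟩⟩
  rcases eq_or_ne e g with rfl | hne
  · exact he
  -- `g` is adjacent to `e` inside `T`, so the maximality of the block absorbs it
  have hg : g ∈ level H 2 := ⟨hH.1 T hT.1 g hgT, hg₂⟩
  refine hB.1.mem_of_union_mem_level he ⟨(hz g hgT hg₂).2 hzg, hg⟩ hg ?_
  rwa [Finset.union_eq_of_ne_of_card_eq_two heT hgT hT.2 (hBN he).2.2 hg₂ hne]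

/-- The 2-faces of the triangle lying in `B` are either none or the two through the apex. -/
theorem kappa_triangle_mod_two (hH : IsCSS H) (hB : IsSepBlock D B) {i₁ i₂ i₃ : I}
    (hp : IsKPath H 2 [{i₁, i₃}, {i₃, i₂}]) :
    kappa B [{i₁}, {i₂}] % 2 = kappa B [{i₁}, {i₃}, {i₂}] % 2 := by
  have h₁₃ := (hp.2.1 {i₁, i₃} (by simp)).2
  have h₃₂ := (hp.2.1 {i₃, i₂} (by simp)).2
  have hT := List.isChain_pair.1 hp.2.2
  have h₁₂ : i₁ ≠ i₂ := by
    rintro rfl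
    have := hT.2
    rw [Finset.pair_comm i₃ i₁, Finset.union_self] at this
    omega
  simp only [Finset.card_pair_eq_two_iff] at h₁₃ h₃₂
  by_cases hB₀ : ({i₁, i₂} : Finset I) ∈ B ∨ ({i₁, i₃} : Finset I) ∈ B ∨
      ({i₃, i₂} : Finset I) ∈ B
  · obtain ⟨e, he, heT⟩ : ∃ e ∈ B, e ⊆ {i₁, i₃} ∪ {i₃, i₂} := by
      rcases hB₀ with h | h | h <;> exact ⟨_, h, by simp [Finset.insert_subset_iff]⟩
    obtain ⟨z, hzT, hz⟩ := hB.exists_apex hH hT he heT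
    have e₁₂ := hz {i₁, i₂} (by simp) (Finset.card_pair h₁₂)
    have e₁₃ := hz {i₁, i₃} (by simp) (Finset.card_pair h₁₃)
    have e₃₂ := hz {i₃, i₂} (by simp) (Finset.card_pair h₃₂)
    simp only [kappa, subSup, List.tail_cons, List.zipWith_cons_cons, List.zipWith_nil_right,
      List.countP_cons, List.countP_nil, Finset.singleton_union, e₁₂, e₁₃, e₃₂]
    simp only [Finset.mem_union, Finset.mem_insert, Finset.mem_singleton] at hzT
    rcases hzT with (rfl | rfl) | (rfl | rfl) <;>
      simp [h₁₂, h₁₃, h₃₂, h₁₂.symm, h₁₃.symm, h₃₂.symm]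
  · simp only [not_or] at hB₀
    simp [kappa, subSup, hB₀]

theorem kappa_mod_two_eq_of_elemPairCore (hH : IsCSS H) (hB : IsSepBlock D B)
    {ε ε' : List (Finset I)} (h : ElemPairCore H ε ε') (δ ρ : List (Finset I)) :
    kappa B (δ ++ ε ++ ρ) % 2 = kappa B (δ ++ ε' ++ ρ) % 2 := by
  rcases h with rfl | ⟨i₁, i₂, rfl, rfl⟩ | ⟨i₁, i₂, i₃, rfl, rfl, hp⟩
  · rfl
  · have := kappa_append_add_kappa B δ ρ (ε := [{i₁}, {i₂}, {i₁}]) (ε' := [{i₁}])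
      rfl rfl
    have hback : kappa B [{i₁}, {i₂}, {i₁}] = 2 * kappa B [{i₁}, {i₂}] :=
      (kappa_glue B (p := [{i₁}, {i₂}]) (x := {i₂}) rfl [{i₁}]).trans
        (by rw [two_mul, kappa_pair_comm B {i₂}])
    rw [kappa_singleton] at this
    omega
  · have := kappa_append_add_kappa B δ ρ (ε := [{i₁}, {i₂}])
      (ε' := [{i₁}, {i₃}, {i₂}]) rfl rfl
    have := hB.kappa_triangle_mod_two hH hp
    omega

theorem kappa_mod_two_eq_of_elemHomotopy (hH : IsCSS H) (hB : IsSepBlock D B)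
    {γ₁ γ₂ : List (Finset I)} (h : ElemHomotopy H γ₁ γ₂) :
    kappa B γ₁ % 2 = kappa B γ₂ % 2 := by
  obtain ⟨δ, ε, ε', ρ, hε | hε, rfl, rfl⟩ := h
  · exact hB.kappa_mod_two_eq_of_elemPairCore hH hε δ ρ
  · exact (hB.kappa_mod_two_eq_of_elemPairCore hH hε δ ρ).symm

theorem mod_two_eq_of_joinedCrossing (hH : IsCSS H) (hsc : SimplyConnected H)
    (hB : IsSepBlock D B) {m n : ℕ} {X Y : Finset I} (h : JoinedCrossing H B m X Y)
    (h' : JoinedCrossing H B n X Y) : m % 2 = n % 2 := by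
  obtain ⟨γ, hγ, hj, rfl⟩ := h
  obtain ⟨γ', hγ', hj', rfl⟩ := h'
  obtain ⟨-, hrel⟩ := hsc.2 γ γ' hγ hγ' hγ.2.1 hγ'.2.1 (hj.1.trans hj'.1.symm)
    (hj.2.trans hj'.2.symm)
  clear hγ' hj'
  induction hrel with
  | refl => rfl
  | tail _ hstep ih => exact ih.trans (hB.kappa_mod_two_eq_of_elemHomotopy hH hstep.1)

theorem exists_joinedCrossing_zero_of_union_mem_level (hH : IsCSS H) (hB : IsSepBlock D B)
    {f f₁ : Finset I} (hf : f ∈ B) (hf₁ : f₁ ∈ B) (hT : f ∪ f₁ ∈ level H 3) {v : I}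
    (hv : v ∈ f) : ∃ w ∈ f₁, JoinedCrossing H B 0 {v} {w} := by
  by_cases hv₁ : v ∈ f₁
  · exact ⟨v, hv₁, .refl (singleton_mem_level hH v)⟩
  have hBN : B ⊆ D.N ∩ level H 2 := hB.1.2.1
  obtain ⟨w, hw⟩ : (f₁ \ f).Nonempty := Finset.sdiff_nonempty.2 fun h => by
    have := hT.2
    rw [Finset.union_eq_left.2 h, (hBN hf).2.2] at this
    omega
  rw [Finset.mem_sdiff] at hw
  obtain ⟨z, -, hz⟩ := hB.exists_apex hH hT hf Finset.subset_union_left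
  have hzf := (hz f Finset.subset_union_left (hBN hf).2.2).1 hf
  have hzf₁ := (hz f₁ Finset.subset_union_right (hBN hf₁).2.2).1 hf₁
  have hvw : ({v, w} : Finset I) ⊆ f ∪ f₁ := by
    simp [Finset.insert_subset_iff, hv, hw.1]
  have hne : v ≠ w := by rintro rfl; exact hw.2 hv
  -- the apex lies in both `f` and `f₁`, hence is neither `v` nor `w`
  have hvwB : ({v, w} : Finset I) ∉ B := by
    rw [hz _ hvw (Finset.card_pair hne), Finset.mem_insert, Finset.mem_singleton]
    rintro (rfl | rfl)
    exacts [hv₁ hzf₁, hw.2 hzf]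
  have h := JoinedCrossing.of_pair (B := B) (singleton_mem_level hH v)
    (singleton_mem_level hH w) (by
      rw [Finset.singleton_union]
      exact ⟨hH.1 _ hT.1 _ hvw, Finset.card_pair hne⟩)
  rw [kappa_pair_of_not_mem B (by rwa [Finset.singleton_union])] at h
  exact ⟨w, hw.1, h⟩

theorem exists_joinedCrossing_zero (hH : IsCSS H) (hB : IsSepBlock D B) {e e' : Finset I}
    (he : e ∈ B) (he' : e' ∈ B) {v : I} (hv : v ∈ e) :
    ∃ w ∈ e', JoinedCrossing H B 0 {v} {w} := by
  obtain ⟨φ, hφ, hj, hφB⟩ := hB.1.2.2.1 e he e' he'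
  induction φ generalizing e v with
  | nil => exact absurd rfl hφ.1
  | cons f t ih =>
    obtain rfl : f = e := Option.some.inj hj.1
    rcases t with _ | ⟨f₁, t⟩
    · obtain rfl : f = e' := Option.some.inj hj.2
      exact ⟨v, hv, .refl (singleton_mem_level hH v)⟩
    obtain ⟨w₁, hw₁, h₁⟩ := hB.exists_joinedCrossing_zero_of_union_mem_level hH he
      (hφB f₁ (by simp)) (List.isChain_cons_cons.1 hφ.2.2).1 hv
    obtain ⟨w, hw, h₂⟩ := ih (hφB f₁ (by simp)) hw₁
      (hφ.of_cons (List.cons_ne_nil f₁ t)) ⟨rfl, by rw [← hj.2, List.getLast?_cons_cons]⟩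
      fun K hK => hφB K (List.mem_cons_of_mem f hK)
    exact ⟨w, hw, h₁.trans h₂⟩

/-- Between the first two crossings, reroute inside the block: from the first crossing edge
walk to an endpoint of the second one without crossing `B`, then cross it at most once. -/
theorem exists_joinedCrossing_lt (hH : IsCSS H) (hB : IsSepBlock D B) {n : ℕ}
    {X Y : Finset I} (h : JoinedCrossing H B n X Y) (hn : 2 ≤ n) :
    ∃ m < n, JoinedCrossing H B m X Y := by
  obtain ⟨x, y, hxy, hXx, hyY⟩ := h.exists_first_crossing (by omega)
  obtain ⟨x₂, y₂, hxy₂, -, hy₂Y⟩ := hyY.exists_first_crossing (by omega)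
  obtain ⟨w, hw, hxw⟩ :=
    hB.exists_joinedCrossing_zero hH hxy hxy₂ (Finset.mem_insert_self x {y})
  obtain ⟨m, hm, hwy₂⟩ := JoinedCrossing.exists_le_one_of_mem hH hxy₂ (hB.1.2.1 hxy₂).2 hw
    (Finset.mem_insert_of_mem (Finset.mem_singleton_self y₂))
  refine ⟨m + (n - 1 - 1), by omega, ?_⟩
  simpa using ((hXx.trans hxw).trans hwy₂).trans hy₂Y

theorem joinedCrossing_one_of_odd (hH : IsCSS H) (hsc : SimplyConnected H)
    (hB : IsSepBlock D B) {n : ℕ} {X Y : Finset I} (hn : Odd n)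
    (h : JoinedCrossing H B n X Y) : JoinedCrossing H B 1 X Y := by
  induction n using Nat.strong_induction_on with
  | _ n ih =>
    rcases eq_or_ne n 1 with rfl | hn₁
    · exact h
    obtain ⟨m, hm, h'⟩ := hB.exists_joinedCrossing_lt hH h (by obtain ⟨k, rfl⟩ := hn; omega)
    have hpar := hB.mod_two_eq_of_joinedCrossing hH hsc h' h
    exact ih m hm (Nat.odd_iff.2 (hpar.trans (Nat.odd_iff.1 hn))) h'

end IsSepBlock

theorem BBset_joined_with_single_crossing_general
    {I : Type*} [DecidableEq I] (H : Set (Finset I))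
    (hH : IsCSS H) (hsc : SimplyConnected H)
    (D : NodalDatum H) (B : Set (Finset I)) (hB : IsSepBlock D B) :
    ∀ (i j : I), ({j} : Finset I) ∈ BBset H B i →
      ∃ γ : List (Finset I), IsKPath H 1 γ ∧
        Joins γ ({i} : Finset I) ({j} : Finset I) ∧ kappa B γ = 1 := by
  rintro i j ⟨-, γ, hγ, hj, hodd⟩
  exact hB.joinedCrossing_one_of_odd hH hsc hodd ⟨γ, hγ, hj, rfl⟩

/-- For a nodal separating block `B` of a simply connected combinatorial
strata structure: for every `i ∈ I` and every `{j} ∈ B_B(i)`, there is a 1-path `γ` in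
`H` joining `{i}` and `{j}` with `κ_B(γ) = 1`. -/
theorem BBset_joined_with_single_crossing
    {I : Type*} [Fintype I] [DecidableEq I] (H : Set (Finset I))
    (hH : IsCSS H) (hsc : SimplyConnected H)
    (D : NodalDatum H) (B : Set (Finset I)) (hB : IsSepBlock D B) :
    ∀ (i j : I), ({j} : Finset I) ∈ BBset H B i →
      ∃ γ : List (Finset I), IsKPath H 1 γ ∧
        Joins γ ({i} : Finset I) ({j} : Finset I) ∧ kappa B γ = 1 :=
  BBset_joined_with_single_crossing_general H hH hsc D B hB
end

section
/- Let H be a simply connected combinatorial strata structure endowed with a datum (N, {P_J}) of nodal strata, with nodal separating blocks enumerated B₁, …, B_n and maps Φ_m as defined. Fix 0 ≤ m < n and let δ^m ∈ Δ_m be the common value of Φ_m on the vertices of the strata of B_{m+1}. Then for every c ∈ Δ_m with c ≠ δ^m, there exists λ_m(c) ∈ {0,1} such that Φ_{m+1}({i}) = (c, λ_m(c)) for every {i} ∈ Φ_m^{-1}(c). -/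
open Classical in
/-- `Φ_m` for the enumeration `B` of the nodal separating blocks and base point `i₀`,
evaluated on the singleton stratum `{i}` (identified with `i`):
`Φ_m({i})(ℓ) = 0` if `{i} ∈ A_{B_ℓ}(i₀)` and `Φ_m({i})(ℓ) = 1` (`true`) if
`{i} ∈ B_{B_ℓ}(i₀)`. -/
noncomputable def PhiM {I : Type*} [DecidableEq I] {n : ℕ} (H : Set (Finset I)) (i₀ : I)
    (B : Fin n → Set (Finset I)) (m : ℕ) (hm : m ≤ n) (i : I) : Fin m → Bool :=
  fun ℓ => decide (({i} : Finset I) ∈ BBset H (B (Fin.castLE hm ℓ)) i₀)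

/-!
Every triangle of `H` contains an even number of edges of a separating block `C`: if one of
its edges lies in `C ⊆ N*`, the triangle is nodal, its two nodal edges are 2-adjacent and hence
both in `C`, and its third edge is not nodal. So the parity of `κ_C` is invariant under
elementary homotopies, and by simple connectivity the `C`-coordinate of `Φ` is well defined and
changes exactly across the edges of `C`.

Let `C = B_{m+1}`, pick `ℓ` with `c ℓ ≠ δ^m ℓ` and put `C' = B_ℓ`. Since `C'` is 2-connected
and no triangle through an edge of `C'` has an edge in `C`, the `C`-coordinate takes a single
value `μ` on the vertices of `C'`. The function equal to the `C`-coordinate on the `c ℓ`-side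
of `C'` and to `μ` elsewhere is then constant along every edge of `H` (edges of `C` avoid that
side, edges of `C'` carry `μ`, all other edges preserve both coordinates), hence constant.
-/

section Paths

variable {I : Type*} [DecidableEq I]

open Classical in
theorem kappa_cons_cons (C : Set (Finset I)) (J J' : Finset I) (l : List (Finset I)) :
    kappa C (J :: J' :: l) = (if J ∪ J' ∈ C then 1 else 0) + kappa C (J' :: l) := by
  simp [kappa, subSup, List.countP_cons, add_comm]

@[simp]
theorem kappa_singleton_s10 (C : Set (Finset I)) (J : Finset I) : kappa C [J] = 0 := rfl

theorem kappa_append_cons (C : Set (Finset I)) (a : List (Finset I)) (x : Finset I)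
    (b : List (Finset I)) : kappa C (a ++ x :: b) = kappa C (a ++ [x]) + kappa C (x :: b) := by
  induction a with
  | nil => simp
  | cons d a ih =>
    cases a with
    | nil => simp [kappa_cons_cons]
    | cons e a => simp only [List.cons_append, kappa_cons_cons] at ih ⊢; omega

theorem kappa_append_append (C : Set (Finset I)) (δ ρ : List (Finset I)) {ε : List (Finset I)}
    {x y : Finset I} (hx : ε.head? = some x) (hy : ε.getLast? = some y) :
    kappa C (δ ++ ε ++ ρ) = kappa C (δ ++ [x]) + kappa C ε + kappa C (y :: ρ) := by
  obtain ⟨ε', rfl⟩ := List.head?_eq_some_iff.mp hx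
  obtain ⟨ε'', hε''⟩ := List.getLast?_eq_some_iff.mp hy
  have hsplit : x :: (ε' ++ ρ) = ε'' ++ y :: ρ := by
    rw [← List.cons_append, hε'', List.append_assoc, List.singleton_append]
  rw [List.append_assoc, List.cons_append, kappa_append_cons C δ, hsplit, kappa_append_cons C ε'',
    hε'', add_assoc]

theorem IsKPath.append_singleton {H : Set (Finset I)} {k : ℕ} {γ : List (Finset I)}
    {J : Finset I} (hγ : IsKPath H k γ) (hJ : γ.getLast? = some J) {J' : Finset I}
    (hJ' : J' ∈ level H k) (hJJ' : J ∪ J' ∈ level H (k + 1)) : IsKPath H k (γ ++ [J']) := by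
  obtain ⟨-, hmem, hchain⟩ := hγ
  refine ⟨by simp, ?_, ?_⟩
  · simp only [List.mem_append, List.mem_singleton]
    rintro K (hK | rfl)
    exacts [hmem K hK, hJ']
  · exact hchain.append (List.isChain_singleton _) (by simp_all)

end Paths

section Connectivity

variable {I : Type*} [DecidableEq I] {H : Set (Finset I)} {k : ℕ}

def KAdj (H : Set (Finset I)) (k : ℕ) (A : Set (Finset I)) (J J' : Finset I) : Prop :=
  J ∈ A ∧ J' ∈ A ∧ J ∪ J' ∈ level H (k + 1)

theorem KAdj.symm {A : Set (Finset I)} {J J' : Finset I} (h : KAdj H k A J J') :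
    KAdj H k A J' J :=
  ⟨h.2.1, h.1, Finset.union_comm J J' ▸ h.2.2⟩

theorem KAdj.mono {A A' : Set (Finset I)} (hAA' : A ⊆ A') {J J' : Finset I}
    (h : KAdj H k A J J') : KAdj H k A' J J' :=
  ⟨hAA' h.1, hAA' h.2.1, h.2.2⟩

theorem KConnectedIn.subset_level {A : Set (Finset I)} (hA : KConnectedIn H k A) :
    A ⊆ level H k := by
  intro J hJ
  obtain ⟨γ, hγ, hjoin, -⟩ := hA J hJ J hJ
  exact hγ.2.1 J (List.mem_of_head? hjoin.1)

theorem IsKPath.reflTransGen {A : Set (Finset I)} {γ : List (Finset I)} {J J' : Finset I}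
    (hγ : IsKPath H k γ) (hjoin : Joins γ J J') (hA : ∀ K ∈ γ, K ∈ A) :
    Relation.ReflTransGen (KAdj H k A) J J' := by
  obtain ⟨l, rfl⟩ := List.head?_eq_some_iff.mp hjoin.1
  refine List.relationReflTransGen_of_exists_isChain_cons l
    (hγ.2.2.imp_of_mem_imp fun _ _ hK hK' h => ⟨hA _ hK, hA _ hK', h⟩) ?_
  simpa [List.getLast?_eq_some_getLast] using hjoin.2

theorem KConnectedIn.reflTransGen {A : Set (Finset I)} (hA : KConnectedIn H k A)
    {J J' : Finset I} (hJ : J ∈ A) (hJ' : J' ∈ A) :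
    Relation.ReflTransGen (KAdj H k A) J J' := by
  obtain ⟨γ, hγ, hjoin, hsupp⟩ := hA J hJ J' hJ'
  exact hγ.reflTransGen hjoin hsupp

theorem kConnectedIn_of_reflTransGen {A : Set (Finset I)} (hA : A ⊆ level H k)
    {J₀ : Finset I} (h : ∀ J ∈ A, Relation.ReflTransGen (KAdj H k A) J₀ J) :
    KConnectedIn H k A := by
  have hpath : ∀ {J J'}, J ∈ A → Relation.ReflTransGen (KAdj H k A) J J' →
      ∃ γ : List (Finset I), IsKPath H k γ ∧ Joins γ J J' ∧ ∀ K ∈ γ, K ∈ A := by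
    intro J J' hJ hJJ'
    obtain ⟨l, hchain, hlast⟩ := List.exists_isChain_cons_of_relationReflTransGen hJJ'
    have hsupp : ∀ K ∈ J :: l, K ∈ A :=
      hchain.induction _ _ (fun _ _ hKK' _ => hKK'.2.1) fun _ => hJ
    exact ⟨J :: l, ⟨List.cons_ne_nil _ _, fun K hK => hA (hsupp K hK),
      hchain.imp fun _ _ hKK' => hKK'.2.2⟩, ⟨rfl, by simp [List.getLast?_eq_some_getLast, hlast]⟩,
      hsupp⟩
  intro J hJ J' hJ'
  have hback : Relation.ReflTransGen (KAdj H k A) J J₀ :=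
    Relation.reflTransGen_swap.mp (Relation.ReflTransGen.mono (fun _ _ => KAdj.symm) _ _ (h J hJ))
  exact hpath hJ (hback.trans (h J' hJ'))

theorem IsKComponent.eq_of_mem {A C₁ C₂ : Set (Finset I)} (h₁ : IsKComponent H k A C₁)
    (h₂ : IsKComponent H k A C₂) {J : Finset I} (hJ₁ : J ∈ C₁) (hJ₂ : J ∈ C₂) : C₁ = C₂ := by
  have hconn : KConnectedIn H k (C₁ ∪ C₂) := by
    refine kConnectedIn_of_reflTransGen (J₀ := J)
      (Set.union_subset h₁.2.2.1.subset_level h₂.2.2.1.subset_level) ?_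
    rintro J' (hJ' | hJ')
    · exact Relation.ReflTransGen.mono (fun _ _ => KAdj.mono Set.subset_union_left) _ _
        (h₁.2.2.1.reflTransGen hJ₁ hJ')
    · exact Relation.ReflTransGen.mono (fun _ _ => KAdj.mono Set.subset_union_right) _ _
        (h₂.2.2.1.reflTransGen hJ₂ hJ')
  have hsub : C₁ ∪ C₂ ⊆ A := Set.union_subset h₁.2.1 h₂.2.1
  exact (h₁.2.2.2 _ Set.subset_union_left hsub hconn).symm.trans
    (h₂.2.2.2 _ Set.subset_union_right hsub hconn)

theorem IsKComponent.mem_of_union_mem {A C : Set (Finset I)} (hC : IsKComponent H k A C)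
    {J J' : Finset I} (hJ : J ∈ C) (hJ'A : J' ∈ A) (hJ' : J' ∈ level H k)
    (hJJ' : J ∪ J' ∈ level H (k + 1)) : J' ∈ C := by
  have hconn : KConnectedIn H k (insert J' C) := by
    refine kConnectedIn_of_reflTransGen (J₀ := J)
      (Set.insert_subset hJ' hC.2.2.1.subset_level) ?_
    rintro K (rfl | hK)
    · exact .single ⟨Set.mem_insert_of_mem _ hJ, Set.mem_insert _ _, hJJ'⟩
    · exact Relation.ReflTransGen.mono (fun _ _ => KAdj.mono (Set.subset_insert _ _)) _ _
        (hC.2.2.1.reflTransGen hJ hK)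
  rw [← hC.2.2.2 _ (Set.subset_insert _ _) (Set.insert_subset hJ'A hC.2.1) hconn]
  exact Set.mem_insert _ _

end Connectivity

section Strata

theorem singleton_mem_level_one {I : Type*} {H : Set (Finset I)} (hH : IsCSS H) (i : I) :
    ({i} : Finset I) ∈ level H 1 :=
  ⟨hH.2 i, Finset.card_singleton i⟩

variable {I : Type*} [DecidableEq I] {H : Set (Finset I)}

theorem union_mem_level_three (hH : IsCSS H) {T e f : Finset I} (hT : T ∈ H)
    (hT3 : T.card ≤ 3) (he : e ⊆ T) (hf : f ⊆ T) (he2 : e.card = 2) (hf2 : f.card = 2)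
    (hef : e ≠ f) : e ∪ f ∈ level H 3 := by
  have hsub : e ∪ f ⊆ T := Finset.union_subset he hf
  have hlt : e.card < (e ∪ f).card := by
    refine Finset.card_lt_card (Finset.subset_union_left.ssubset_of_ne fun h => hef ?_)
    exact (Finset.eq_of_subset_of_card_le (h ▸ Finset.subset_union_right) (by omega)).symm
  exact ⟨hH.1 T hT _ hsub, by have := Finset.card_le_card hsub; omega⟩

theorem NodalDatum.pair_mem_N_iff (D : NodalDatum H) {T : Finset I} (hT : T ∈ D.N)
    {u w : I} (hu : u ∈ T) (hw : w ∈ T) :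
    ({u, w} : Finset I) ∈ D.N ↔ ¬(u ∈ D.plus T ↔ w ∈ D.plus T) := by
  have hminus : ∀ v ∈ T, v ∈ D.minus T ↔ v ∉ D.plus T := by
    intro v hv
    have hv' : v ∈ D.plus T ∪ D.minus T := by rwa [D.union_eq T hT]
    have hdisj : v ∈ D.plus T → v ∉ D.minus T := fun h => Finset.disjoint_left.mp (D.disj T hT) h
    rw [Finset.mem_union] at hv'
    tauto
  rw [D.mem_iff T hT _ (by simp [Finset.insert_subset_iff, hu, hw])]
  simp only [Finset.Nonempty, Finset.mem_inter, Finset.mem_insert, Finset.mem_singleton,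
    or_and_right, exists_or, exists_eq_left, hminus u hu, hminus w hw]
  tauto

theorem IsSepBlock.pair_mem_iff_xor (hH : IsCSS H) {D : NodalDatum H} {C : Set (Finset I)}
    (hC : IsSepBlock D C) {x y z : I} (hT : ({x, y, z} : Finset I) ∈ level H 3) :
    ({x, y} : Finset I) ∈ C ↔ Xor (({x, z} : Finset I) ∈ C) (({z, y} : Finset I) ∈ C) := by
  set T : Finset I := {x, y, z}
  have hnot_pair : ∀ a b : I, T ⊆ {a, b} → False := fun a b h => by
    have := (Finset.card_le_card h).trans Finset.card_le_two
    have := hT.2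
    omega
  have hxy : x ≠ y := by rintro rfl; exact hnot_pair x z (by simp [T])
  have hxz : x ≠ z := by rintro rfl; exact hnot_pair x y (by simp [T, Finset.insert_subset_iff])
  have hyz : y ≠ z := by rintro rfl; exact hnot_pair x y (by simp [T])
  have hxyT : ({x, y} : Finset I) ⊆ T := by simp [T, Finset.insert_subset_iff]
  have hxzT : ({x, z} : Finset I) ⊆ T := by simp [T, Finset.insert_subset_iff]
  have hzyT : ({z, y} : Finset I) ⊆ T := by simp [T, Finset.insert_subset_iff]
  by_cases hmeet : ∃ e ∈ C, e ⊆ T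
  · obtain ⟨e, he, heT⟩ := hmeet
    have hTN : T ∈ D.N := (hC.2 he).2 T hT.1 heT
    -- two distinct nodal edges of the triangle are 2-adjacent, so they lie in the same block
    have hmem_iff : ∀ p ⊆ T, p.card = 2 → (p ∈ C ↔ p ∈ D.N) := by
      intro p hpT hp2
      refine ⟨fun hp => (hC.1.2.1 hp).1, fun hpN => ?_⟩
      by_cases hep : e = p
      · exact hep ▸ he
      have hpH : p ∈ level H 2 := ⟨hH.1 T hT.1 p hpT, hp2⟩
      exact IsKComponent.mem_of_union_mem hC.1 he ⟨hpN, hpH⟩ hpH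
        (union_mem_level_three hH hT.1 hT.2.le heT hpT (hC.1.2.1 he).2.2 hp2 hep)
    rw [hmem_iff _ hxyT (Finset.card_pair hxy), hmem_iff _ hxzT (Finset.card_pair hxz),
      hmem_iff _ hzyT (Finset.card_pair hyz.symm), D.pair_mem_N_iff hTN (hxyT (by simp))
      (hxyT (by simp)), D.pair_mem_N_iff hTN (hxzT (by simp)) (hxzT (by simp)),
      D.pair_mem_N_iff hTN (hzyT (by simp)) (hzyT (by simp)), xor_iff_not_iff]
    tauto
  · have hnot : ∀ p ⊆ T, p ∉ C := fun p hpT hp => hmeet ⟨p, hp, hpT⟩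
    have := hnot _ hxyT
    have := hnot _ hxzT
    have := hnot _ hzyT
    rw [xor_iff_not_iff]
    tauto

end Strata

section Parity

variable {I : Type*} [DecidableEq I] {H : Set (Finset I)} {D : NodalDatum H}
  {C : Set (Finset I)}

theorem IsSepBlock.kappa_mod_two_eq_of_elemPairCore_s10 (hH : IsCSS H) (hC : IsSepBlock D C)
    {ε₁ ε₂ : List (Finset I)} (hε : ElemPairCore H ε₁ ε₂) (δ ρ : List (Finset I)) :
    kappa C (δ ++ ε₁ ++ ρ) % 2 = kappa C (δ ++ ε₂ ++ ρ) % 2 := by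
  rcases hε with rfl | ⟨a, b, rfl, rfl⟩ | ⟨a, b, c, rfl, rfl, hpath⟩
  · rfl
  · rw [kappa_append_append C δ ρ (x := {a}) (y := {a}) rfl rfl,
      kappa_append_append C δ ρ (x := {a}) (y := {a}) rfl rfl]
    simp only [kappa_cons_cons, kappa_singleton_s10]
    rw [Finset.union_comm {b}]
    split_ifs <;> omega
  · rw [kappa_append_append C δ ρ (x := {a}) (y := {b}) rfl rfl,
      kappa_append_append C δ ρ (x := {a}) (y := {b}) rfl rfl]
    have hT : ({a, b, c} : Finset I) ∈ level H 3 := by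
      convert (List.isChain_cons_cons.mp hpath.2.2).1 using 1
      ext v
      simp only [Finset.mem_insert, Finset.mem_singleton, Finset.mem_union]
      tauto
    have hxor := hC.pair_mem_iff_xor hH hT
    simp only [kappa_cons_cons, kappa_singleton_s10, ← Finset.insert_eq]
    rw [xor_iff_not_iff] at hxor
    by_cases hab : ({a, b} : Finset I) ∈ C <;> by_cases hac : ({a, c} : Finset I) ∈ C <;>
      by_cases hcb : ({c, b} : Finset I) ∈ C <;> simp [hab, hac, hcb] at hxor ⊢
    omega

theorem IsSepBlock.kappa_mod_two_eq_of_homotopicIn (hH : IsCSS H) (hC : IsSepBlock D C)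
    {A : Set (Finset I)} {γ γ' : List (Finset I)} (h : HomotopicIn H A γ γ') :
    kappa C γ % 2 = kappa C γ' % 2 := by
  obtain ⟨-, hchain⟩ := h
  induction hchain with
  | refl => rfl
  | tail _ hstep ih =>
    obtain ⟨δ, ε₁, ε₂, ρ, hpair | hpair, rfl, rfl⟩ := hstep.1
    · exact ih.trans (hC.kappa_mod_two_eq_of_elemPairCore_s10 hH hpair δ ρ)
    · exact ih.trans (hC.kappa_mod_two_eq_of_elemPairCore_s10 hH hpair δ ρ).symm

end Parity

theorem OneConnected.apply_eq_of_forall_edge {I : Type*} [DecidableEq I] {H : Set (Finset I)}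
    (hH : IsCSS H) (hc : OneConnected H) {β : Type*} (g : I → β)
    (hg : ∀ u v, ({u, v} : Finset I) ∈ H → u ≠ v → g u = g v) (i j : I) : g i = g j := by
  suffices h : ∀ J, Relation.ReflTransGen (KAdj H 1 (level H 1)) {i} J → ∀ v ∈ J, g v = g i from
    (h _ (KConnectedIn.reflTransGen hc (singleton_mem_level_one hH i)
      (singleton_mem_level_one hH j)) j (Finset.mem_singleton_self j)).symm
  intro J hJ
  induction hJ with
  | refl => simp
  | tail _ hadj ih =>
    obtain ⟨u, rfl⟩ := Finset.card_eq_one.mp hadj.1.2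
    obtain ⟨v, rfl⟩ := Finset.card_eq_one.mp hadj.2.1.2
    obtain ⟨huvH, huv2⟩ := hadj.2.2
    rw [← Finset.insert_eq] at huvH huv2
    have huv : u ≠ v := by rintro rfl; simp at huv2
    simpa [← hg u v huvH huv] using ih

section BlockParity

variable {I : Type*} [DecidableEq I] {H : Set (Finset I)} {D : NodalDatum H}
  {C C' : Set (Finset I)}

open Classical in
noncomputable def blockParity (H C : Set (Finset I)) (i₀ i : I) : Bool :=
  decide (({i} : Finset I) ∈ BBset H C i₀)

theorem PhiM_apply {n : ℕ} (i₀ : I) (B : Fin n → Set (Finset I)) {m : ℕ} (hm : m ≤ n) (i : I)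
    (ℓ : Fin m) : PhiM H i₀ B m hm i ℓ = blockParity H (B (Fin.castLE hm ℓ)) i₀ i :=
  rfl

theorem PhiM_succ {n : ℕ} (i₀ : I) (B : Fin n → Set (Finset I)) {m : ℕ} (hm : m < n) (i : I) :
    PhiM H i₀ B (m + 1) hm i =
      Fin.snoc (PhiM H i₀ B m hm.le i) (blockParity H (B ⟨m, hm⟩) i₀ i) := by
  funext ℓ
  induction ℓ using Fin.lastCases with
  | last => rw [Fin.snoc_last]; rfl
  | cast ℓ => rw [Fin.snoc_castSucc]; rfl

theorem blockParity_eq_decide_odd (hH : IsCSS H) (hsc : SimplyConnected H)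
    (hC : IsSepBlock D C) {i₀ j : I} {γ : List (Finset I)} (hγ : IsKPath H 1 γ)
    (hjoin : Joins γ {i₀} {j}) : blockParity H C i₀ j = decide (Odd (kappa C γ)) := by
  refine decide_eq_decide.mpr ⟨?_, fun hodd => ⟨singleton_mem_level_one hH j, γ, hγ, hjoin, hodd⟩⟩
  rintro ⟨-, γ', hγ', hjoin', hodd⟩
  have hpar := hC.kappa_mod_two_eq_of_homotopicIn hH (hsc.2 γ' γ hγ' hγ hγ'.2.1 hγ.2.1
    (hjoin'.1.trans hjoin.1.symm) (hjoin'.2.trans hjoin.2.symm))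
  rw [Nat.odd_iff] at hodd ⊢
  omega

theorem blockParity_eq_of_pair_not_mem (hH : IsCSS H) (hsc : SimplyConnected H)
    (hC : IsSepBlock D C) (i₀ : I) {u v : I} (huvH : ({u, v} : Finset I) ∈ H)
    (huvC : ({u, v} : Finset I) ∉ C) : blockParity H C i₀ u = blockParity H C i₀ v := by
  rcases eq_or_ne u v with rfl | huv
  · rfl
  obtain ⟨γ, hγ, hjoin, -⟩ :=
    hsc.1 _ (singleton_mem_level_one hH i₀) _ (singleton_mem_level_one hH u)
  have hedge : ({u} : Finset I) ∪ {v} ∈ level H 2 := by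
    rw [← Finset.insert_eq]
    exact ⟨huvH, Finset.card_pair huv⟩
  have hγ' := hγ.append_singleton hjoin.2 (singleton_mem_level_one hH v) hedge
  have hjoin' : Joins (γ ++ [{v}]) {i₀} {v} :=
    ⟨by simp [List.head?_append, hjoin.1], List.getLast?_concat⟩
  rw [blockParity_eq_decide_odd hH hsc hC hγ hjoin, blockParity_eq_decide_odd hH hsc hC hγ' hjoin',
    ← List.nil_append γ, kappa_append_append C [] [{v}] hjoin.1 hjoin.2]
  simp [kappa_cons_cons, huvC]

theorem blockParity_eq_of_subset (hH : IsCSS H) (hsc : SimplyConnected H) (hC : IsSepBlock D C)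
    (hC' : IsSepBlock D C') (hne : C ≠ C') (i₀ : I) {f T : Finset I} (hf : f ∈ C')
    (hT : T ∈ H) (hfT : f ⊆ T) (hT3 : T.card ≤ 3) {u v : I} (hu : u ∈ T) (hv : v ∈ T) :
    blockParity H C i₀ u = blockParity H C i₀ v := by
  rcases eq_or_ne u v with rfl | huv
  · rfl
  have huvT : ({u, v} : Finset I) ⊆ T := by simp [Finset.insert_subset_iff, hu, hv]
  refine blockParity_eq_of_pair_not_mem hH hsc hC i₀ (hH.1 T hT _ huvT) fun huvC => hne ?_
  have hfN := hC'.1.2.1 hf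
  by_cases hfe : ({u, v} : Finset I) = f
  · exact IsKComponent.eq_of_mem hC.1 hC'.1 huvC (hfe ▸ hf)
  · refine IsKComponent.eq_of_mem hC.1 hC'.1 ?_ hf
    exact IsKComponent.mem_of_union_mem hC.1 huvC hfN hfN.2
      (union_mem_level_three hH hT hT3 huvT hfT (Finset.card_pair huv) hfN.2.2 hfe)

theorem exists_blockParity_eq_on_block (hH : IsCSS H) (hsc : SimplyConnected H)
    (hC : IsSepBlock D C) (hC' : IsSepBlock D C') (hne : C ≠ C') (i₀ : I) :
    ∃ μ, ∀ f ∈ C', ∀ u ∈ f, blockParity H C i₀ u = μ := by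
  obtain ⟨e₀, he₀⟩ := hC'.1.1
  have hcard : ∀ {f}, f ∈ C' → f.card = 2 := fun hf => (hC'.1.2.1 hf).2.2
  have hnonempty : ∀ {f}, f ∈ C' → f.Nonempty :=
    fun hf => Finset.card_pos.mp (by rw [hcard hf]; norm_num)
  obtain ⟨u₀, hu₀⟩ := hnonempty he₀
  refine ⟨blockParity H C i₀ u₀, fun f hf => ?_⟩
  induction KConnectedIn.reflTransGen hC'.1.2.2.1 he₀ hf with
  | refl =>
    intro u hu
    exact blockParity_eq_of_subset hH hsc hC hC' hne i₀ he₀ (hC'.1.2.1 he₀).2.1 subset_rfl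
      (by rw [hcard he₀]; norm_num) hu hu₀
  | tail _ hadj ih =>
    intro u hu
    obtain ⟨w, hw⟩ := hnonempty hadj.1
    refine (blockParity_eq_of_subset hH hsc hC hC' hne i₀ hadj.1 hadj.2.2.1
      Finset.subset_union_left hadj.2.2.2.le (Finset.mem_union_right _ hu)
      (Finset.mem_union_left _ hw)).trans (ih hadj.1 w hw)

theorem exists_blockParity_eq_on_side (hH : IsCSS H) (hsc : SimplyConnected H)
    (hC : IsSepBlock D C) (hC' : IsSepBlock D C') (hne : C ≠ C') (i₀ : I) (b : Bool)
    (hCb : ∀ u v, ({u, v} : Finset I) ∈ C →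
      blockParity H C' i₀ u ≠ b ∧ blockParity H C' i₀ v ≠ b) :
    ∃ lam, ∀ i, blockParity H C' i₀ i = b → blockParity H C i₀ i = lam := by
  obtain ⟨μ, hμ⟩ := exists_blockParity_eq_on_block hH hsc hC hC' hne i₀
  let G : I → Bool := fun i => if blockParity H C' i₀ i = b then blockParity H C i₀ i else μ
  have hG : ∀ u v, ({u, v} : Finset I) ∈ H → u ≠ v → G u = G v := by
    intro u v huvH _
    by_cases huvC : ({u, v} : Finset I) ∈ C
    · simp [G, hCb u v huvC]
    by_cases huvC' : ({u, v} : Finset I) ∈ C'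
    · simp only [G, hμ _ huvC' u (by simp), hμ _ huvC' v (by simp), ite_self]
    · simp only [G, blockParity_eq_of_pair_not_mem hH hsc hC i₀ huvH huvC,
        blockParity_eq_of_pair_not_mem hH hsc hC' i₀ huvH huvC']
  refine ⟨G i₀, fun i hi => ?_⟩
  have := OneConnected.apply_eq_of_forall_edge hH hsc.1 G hG i i₀
  simpa [G, hi] using this

end BlockParity

theorem extension_constant_outside_next_block_general
    {I : Type*} [DecidableEq I] (H : Set (Finset I))
    (hH : IsCSS H) (hsc : SimplyConnected H)
    (D : NodalDatum H) (n : ℕ) (B : Fin n → Set (Finset I))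
    (hblock : ∀ ℓ : Fin n, IsSepBlock D (B ℓ)) (hinj : Function.Injective B)
    (i₀ : I) (m : ℕ) (hm : m < n)
    (δm : Fin m → Bool)
    (hδcommon : ∀ i₁ i₂ : I, ({i₁, i₂} : Finset I) ∈ B ⟨m, hm⟩ →
      PhiM H i₀ B m hm.le i₁ = δm ∧ PhiM H i₀ B m hm.le i₂ = δm)
    (c : Fin m → Bool) (hcδ : c ≠ δm) :
    ∃ lam : Bool, ∀ i : I, PhiM H i₀ B m hm.le i = c →
      PhiM H i₀ B (m + 1) hm i = Fin.snoc c lam := by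
  obtain ⟨ℓ, hℓ⟩ := Function.ne_iff.mp hcδ
  have hne : B ⟨m, hm⟩ ≠ B (Fin.castLE hm.le ℓ) := fun h => by
    have := congrArg Fin.val (hinj h)
    simp only [Fin.val_castLE] at this
    omega
  obtain ⟨lam, hlam⟩ := exists_blockParity_eq_on_side hH hsc (hblock _) (hblock _) hne i₀ (c ℓ)
    fun u v huv => by
      obtain ⟨hu, hv⟩ := hδcommon u v huv
      rw [← PhiM_apply, ← PhiM_apply, hu, hv]
      exact ⟨hℓ.symm, hℓ.symm⟩
  refine ⟨lam, fun i hi => ?_⟩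
  rw [PhiM_succ, hi, hlam i (by rw [← PhiM_apply, hi])]

/-- Let `δ^m ∈ Δ_m` be the common value of `Φ_m` on the vertices of the
strata of `B_{m+1}`. Then for every `c ∈ Δ_m` with `c ≠ δ^m` there is `λ_m(c) ∈ {0,1}`
such that `Φ_{m+1}({i}) = (c, λ_m(c))` for every `{i} ∈ Φ_m⁻¹(c)`. -/
theorem extension_constant_outside_next_block
    {I : Type*} [Fintype I] [DecidableEq I] (H : Set (Finset I))
    (hH : IsCSS H) (hsc : SimplyConnected H)
    (D : NodalDatum H) (n : ℕ) (B : Fin n → Set (Finset I))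
    (hblock : ∀ ℓ : Fin n, IsSepBlock D (B ℓ)) (hinj : Function.Injective B)
    (hsurj : ∀ C : Set (Finset I), IsSepBlock D C → ∃ ℓ : Fin n, C = B ℓ)
    (i₀ : I) (m : ℕ) (hm : m < n)
    (δm : Fin m → Bool) (hδ : δm ∈ Set.range (PhiM H i₀ B m hm.le))
    (hδcommon : ∀ i₁ i₂ : I, ({i₁, i₂} : Finset I) ∈ B ⟨m, hm⟩ →
      PhiM H i₀ B m hm.le i₁ = δm ∧ PhiM H i₀ B m hm.le i₂ = δm)
    (c : Fin m → Bool) (hc : c ∈ Set.range (PhiM H i₀ B m hm.le)) (hcδ : c ≠ δm) :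
    ∃ lam : Bool, ∀ i : I, PhiM H i₀ B m hm.le i = c →
      PhiM H i₀ B (m + 1) hm i = Fin.snoc c lam :=
  extension_constant_outside_next_block_general H hH hsc D n B hblock hinj i₀ m hm δm hδcommon c hcδ
end
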